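/- Let G be a triconnected graph, let C be a simple cycle of G, and let u and v be two vertices of G \ C all of whose neighbors in G lie on C. Then the graph obtained from G by identifying u and v into a single vertex is triconnected. -/

import Mathlib

/-! Preamble: finite multigraphs, connectivity, closed walks, contractions,
planar embeddings, levels, double layers, slices, branch decompositions. -/

structure Multigraph : Type 1 where
  V : Type
  E : Type
  fintypeV : Fintype V
  fintypeE : Fintype E
  decEqV : DecidableEq V
  decEqE : DecidableEq E
  ends : E → Sym2 V

attribute [instance] Multigraph.fintypeV Multigraph.fintypeE
attribute [instance] Multigraph.decEqV Multigraph.decEqE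

namespace Multigraph

variable (G : Multigraph)

/-- Reachability inside the vertex set `A`, using only edges in `S`. -/
def Reach (A : Set G.V) (S : Set G.E) : G.V → G.V → Prop :=
  Relation.ReflTransGen (fun a b => a ∈ A ∧ b ∈ A ∧ ∃ e ∈ S, G.ends e = s(a, b))

/-- The subgraph with vertex set `A` and the edges of `S` (restricted to `A`)
is connected. -/
def ConnectedOn (A : Set G.V) (S : Set G.E) : Prop :=
  ∀ u ∈ A, ∀ v ∈ A, G.Reach A S u v

def Connected : Prop := G.ConnectedOn Set.univ Set.univ

/-- `G` remains connected after deleting any `k - 1` edges. -/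
def EdgeConn (k : ℕ) : Prop :=
  ∀ F : Finset G.E, F.card < k → G.ConnectedOn Set.univ (↑F)ᶜ

/-- `G` remains connected after deleting any `k - 1` vertices. -/
def VertexConn (k : ℕ) : Prop :=
  ∀ W : Finset G.V, W.card < k → G.ConnectedOn (↑W)ᶜ Set.univ

/-- The spanning subgraph of `G` with edge set `S` is `k`-edge connected. -/
def EdgeConnSub (S : Set G.E) (k : ℕ) : Prop :=
  ∀ F : Finset G.E, F.card < k → G.ConnectedOn Set.univ (S \ ↑F)

/-- The spanning subgraph of `G` with edge set `S` is `k`-vertex connected. -/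
def VertexConnSub (S : Set G.E) (k : ℕ) : Prop :=
  ∀ W : Finset G.V, W.card < k → G.ConnectedOn (↑W)ᶜ S

def Loopless : Prop := ∀ e : G.E, ¬ (G.ends e).IsDiag

def Simple : Prop := G.Loopless ∧ ∀ e e' : G.E, G.ends e = G.ends e' → e = e'

/-- At most `m` parallel edges between any pair of vertices. -/
def ParallelBound (m : ℕ) : Prop := ∀ p : Sym2 G.V, {e : G.E | G.ends e = p}.ncard ≤ m

def AdjV (u v : G.V) : Prop := ∃ e : G.E, G.ends e = s(u, v)

/-- `H` is a connected component of the subgraph induced by `A`. -/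
def IsCompOf (A H : Set G.V) : Prop :=
  ∃ u ∈ A, H = {v | v ∈ A ∧ G.Reach A Set.univ u v}

end Multigraph

/-! ### Closed walks, circuits and simple cycles -/

structure ClosedWalk (G : Multigraph) where
  n : ℕ
  npos : 0 < n
  vert : ℕ → G.V
  edge : ℕ → G.E
  ends_eq : ∀ i < n, G.ends (edge i) = s(vert i, vert (i + 1))
  closed : vert n = vert 0

namespace ClosedWalk

variable {G : Multigraph} (C : ClosedWalk G)

def edgeSet : Set G.E := {e | ∃ i < C.n, C.edge i = e}

def vertexSet : Set G.V := {v | ∃ i < C.n, C.vert i = v}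

/-- A circuit: a closed walk with no repeated edge. -/
def IsCircuit : Prop := ∀ i < C.n, ∀ j < C.n, C.edge i = C.edge j → i = j

/-- A simple cycle: a circuit with no repeated vertex. -/
def IsSimpleCycle : Prop :=
  C.IsCircuit ∧ ∀ i < C.n, ∀ j < C.n, C.vert i = C.vert j → i = j

end ClosedWalk

namespace Multigraph

variable (G : Multigraph)

/-- `C` is a maximal circuit among the circuits with all edges in `S`. -/
def IsMaxCircuitIn (S : Set G.E) (C : ClosedWalk G) : Prop :=
  C.IsCircuit ∧ C.edgeSet ⊆ S ∧
    ∀ C' : ClosedWalk G, C'.IsCircuit → C'.edgeSet ⊆ S →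
      C.edgeSet ⊆ C'.edgeSet → C'.edgeSet ⊆ C.edgeSet

/-- `C` is a simple cycle all of whose edges lie in `S`. -/
def IsSimpleCycleIn (S : Set G.E) (C : ClosedWalk G) : Prop :=
  C.IsSimpleCycle ∧ C.edgeSet ⊆ S

/-! ### Contractions -/

/-- Identify all vertices in `S` to a single vertex. -/
def contractSetoid (S : Set G.V) : Setoid G.V where
  r a b := a = b ∨ (a ∈ S ∧ b ∈ S)
  iseqv := by
    refine ⟨fun x => Or.inl rfl, ?_, ?_⟩
    · rintro x y (rfl | ⟨hx, hy⟩)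
      · exact Or.inl rfl
      · exact Or.inr ⟨hy, hx⟩
    · rintro x y z (rfl | ⟨hx, hy⟩) h
      · exact h
      · rcases h with rfl | ⟨hy', hz⟩
        · exact Or.inr ⟨hx, hy⟩
        · exact Or.inr ⟨hx, hz⟩

/-- The graph obtained from `G` by contracting the vertex set `S` to one
vertex, deleting the resulting self-loops. -/
noncomputable def contractSet (S : Set G.V) : Multigraph where
  V := Quotient (G.contractSetoid S)
  E := {e : G.E // ¬ (Sym2.map (Quotient.mk (G.contractSetoid S)) (G.ends e)).IsDiag}
  fintypeV := Fintype.ofFinite _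
  fintypeE := Fintype.ofFinite _
  decEqV := Classical.decEq _
  decEqE := Classical.decEq _
  ends := fun e => Sym2.map (Quotient.mk (G.contractSetoid S)) (G.ends e.1)

end Multigraph

namespace Multigraph

variable (G : Multigraph)

/-- Identify the vertices of each connected component of `G ∖ U`. -/
def outsideSetoid (U : Set G.V) : Setoid G.V where
  r a b := a = b ∨ (a ∉ U ∧ b ∉ U ∧ G.Reach Uᶜ Set.univ a b)
  iseqv := by
    refine ⟨fun x => Or.inl rfl, ?_, ?_⟩
    · rintro x y (rfl | ⟨hx, hy, hr⟩)
      · exact Or.inl rfl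
      · refine Or.inr ⟨hy, hx, ?_⟩
        unfold Multigraph.Reach at hr ⊢
        induction hr with
        | refl => exact Relation.ReflTransGen.refl
        | tail _ hab ih =>
          obtain ⟨ha, hb, e, he, hse⟩ := hab
          exact Relation.ReflTransGen.head ⟨hb, ha, e, he, by rw [hse, Sym2.eq_swap]⟩ (ih ha)
    · rintro x y z (rfl | ⟨hx, hy, hxy⟩) h
      · exact h
      · rcases h with rfl | ⟨hy', hz, hyz⟩
        · exact Or.inr ⟨hx, hy, hxy⟩
        · exact Or.inr ⟨hx, hz, hxy.trans hyz⟩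

/-- The graph obtained from `G` by contracting each connected component of
`G ∖ U` to a single node, deleting the resulting self-loops. -/
noncomputable def contractOutside (U : Set G.V) : Multigraph where
  V := Quotient (G.outsideSetoid U)
  E := {e : G.E // ¬ (Sym2.map (Quotient.mk (G.outsideSetoid U)) (G.ends e)).IsDiag}
  fintypeV := Fintype.ofFinite _
  fintypeE := Fintype.ofFinite _
  decEqV := Classical.decEq _
  decEqE := Classical.decEq _
  ends := fun e => Sym2.map (Quotient.mk (G.outsideSetoid U)) (G.ends e.1)

/-- An (arbitrary, fixed) numbering of the edges of `G`. -/
noncomputable def edgeIdx (e : G.E) : ℕ := ((Fintype.equivFin G.E) e : ℕ)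

/-- Delete parallel edges so that at most `m` parallel edges remain between
any pair of vertices (keeping, in each parallel class, the `m` edges of
smallest index). -/
noncomputable def trim (m : ℕ) : Multigraph where
  V := G.V
  E := {e : G.E // {e' : G.E | G.ends e' = G.ends e ∧ G.edgeIdx e' < G.edgeIdx e}.ncard < m}
  fintypeV := G.fintypeV
  fintypeE := Fintype.ofFinite _
  decEqV := G.decEqV
  decEqE := Classical.decEq _
  ends := fun e => G.ends e.1

end Multigraph

/-! ### Planar embeddings, levels and slices -/

/-- A planar embedding of the multigraph `G`: vertices are points of the
plane and edges are arcs joining thir endpoints, arcs being internally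
disjoint from each other and from the vertices. -/
structure Multigraph.PlanarEmb (G : Multigraph) where
  vpos : G.V → ℝ × ℝ
  arc : G.E → ℝ → ℝ × ℝ
  vpos_inj : Function.Injective vpos
  arc_cont : ∀ e, ContinuousOn (arc e) (Set.Icc 0 1)
  arc_ends : ∀ e, Sym2.map vpos (G.ends e) = s(arc e 0, arc e 1)
  arc_inj : ∀ e, ∀ t ∈ Set.Ioo (0:ℝ) 1, ∀ u ∈ Set.Icc (0:ℝ) 1, arc e t = arc e u → t = u
  arc_avoid_vert : ∀ e, ∀ t ∈ Set.Ioo (0:ℝ) 1, arc e t ∉ Set.range vpos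
  arcs_disj : ∀ e e', e ≠ e' → ∀ t ∈ Set.Ioo (0:ℝ) 1, ∀ u ∈ Set.Icc (0:ℝ) 1,
    arc e t ≠ arc e' u

/-- `G` is planar: it admits a planar embedding. -/
def Multigraph.Planar (G : Multigraph) : Prop := Nonempty G.PlanarEmb

/-- A Jordan curve `J` (together with the closed disk it bounds) encloses the
point `p`. -/
def JordanEncloses (J : Set (ℝ × ℝ)) (p : ℝ × ℝ) : Prop :=
  p ∈ J ∨ (p ∉ J ∧ Bornology.IsBounded (connectedComponentIn Jᶜ p))

namespace Multigraph.PlanarEmb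

variable {G : Multigraph} (emb : G.PlanarEmb)

/-- The image in the plane of the subgraph of `G` induced by `A`. -/
def image (A : Set G.V) : Set (ℝ × ℝ) :=
  emb.vpos '' A ∪ ⋃ e ∈ {e : G.E | ∀ v ∈ G.ends e, v ∈ A}, emb.arc e '' Set.Icc 0 1

/-- `p` is a point of the outer (infinite) face of the subgraph of `G`
induced by `A`. -/
def OuterPt (A : Set G.V) (p : ℝ × ℝ) : Prop :=
  p ∉ emb.image A ∧ ¬ Bornology.IsBounded (connectedComponentIn (emb.image A)ᶜ p)

/-- The vertex `v ∈ A` lies on the outer face of the subgraph of `G` induced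
by `A`. -/
def OnOuter (A : Set G.V) (v : G.V) : Prop :=
  v ∈ A ∧ emb.vpos v ∈ closure {p | emb.OuterPt A p}

/-- `V_i`: the set of vertices of level `i`; a vertex has level `i` if it lies
on the outer face after all vertices of smaller levels have been deleted. -/
def levelSet : ℕ → Set G.V
  | i => {v | emb.OnOuter {w | ∀ j, j < i → w ∉ levelSet j} v}
  termination_by i => i
  decreasing_by assumption

/-- The edges of `∂(G[A])`: edges of the subgraph induced by `A` lying on its
outer boundary. -/
def boundarySet (A : Set G.V) : Set G.E :=
  {e | (∀ v ∈ G.ends e, v ∈ A) ∧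
    emb.arc e '' Set.Icc 0 1 ⊆ closure {p | emb.OuterPt A p}}

/-- The curve in the plane traced by a closed walk. -/
def curveOf (C : ClosedWalk G) : Set (ℝ × ℝ) :=
  {p | ∃ i < C.n, p ∈ emb.arc (C.edge i) '' Set.Icc 0 1}

/-- A closed walk encloses the point `p` if some simple cycle contained in it
does. -/
def EnclosesPt (C : ClosedWalk G) (p : ℝ × ℝ) : Prop :=
  ∃ C' : ClosedWalk G, C'.IsSimpleCycle ∧ C'.edgeSet ⊆ C.edgeSet ∧
    JordanEncloses (emb.curveOf C') p

def EnclosesV (C : ClosedWalk G) (v : G.V) : Prop := emb.EnclosesPt C (emb.vpos v)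

end Multigraph.PlanarEmb

/-- `f(i) = max (i·k − k + t) 0`. -/
def fIdx (k t i : ℕ) : ℕ := i * k + t - k

namespace Multigraph.PlanarEmb

variable {G : Multigraph} (emb : G.PlanarEmb)

/-- The set of edges with one endpoint of level `a` and the other of level `b`. -/
def ebtw (a b : ℕ) : Set G.E :=
  {e | ∃ u v, G.ends e = s(u, v) ∧ u ∈ emb.levelSet a ∧ v ∈ emb.levelSet b}

/-- The `i`-th double layer `D_i = E_{i−1,i} ∪ E_i ∪ E_{i,i+1} ∪ E_{i+1}`. -/
def dlayer (i : ℕ) : Set G.E :=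
  emb.ebtw (i - 1) i ∪ emb.ebtw i i ∪ emb.ebtw i (i + 1) ∪ emb.ebtw (i + 1) (i + 1)

/-- `R_j = ⋃_{i ≡ j mod k} D_i`. -/
def rset (k j : ℕ) : Set G.E := ⋃ i ∈ {i : ℕ | i % k = j}, emb.dlayer i

/-- The edge set of `H_i`: the subgraph induced by the vertices of levels
`f(i)−1` through `f(i+1)+1`, minus the edges of `E_{f(i)−1}`. -/
def hiEdges (k t i : ℕ) : Set G.E :=
  {e | ∀ v ∈ G.ends e, ∃ j : ℕ, (fIdx k t i : ℤ) - 1 ≤ (j : ℤ) ∧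
      (j : ℤ) ≤ (fIdx k t (i + 1) : ℤ) + 1 ∧ v ∈ emb.levelSet j} \
  {e | ∀ v ∈ G.ends e, ∃ j : ℕ, (j : ℤ) = (fIdx k t i : ℤ) - 1 ∧ v ∈ emb.levelSet j}

/-- The vertices of `H_i` outside `V_{f(i)−1} ∪ V_{f(i+1)+1}` enclosed by the
circuit `Ca`. -/
def sliceU (k t i : ℕ) (Ca : ClosedWalk G) : Set G.V :=
  {v | (∃ j, fIdx k t i ≤ j ∧ j ≤ fIdx k t (i + 1) ∧ v ∈ emb.levelSet j) ∧
    emb.EnclosesV Ca v}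

/-- The 3EC slice `H_i^a`: contract every connected component of `G ∖ U` and
keep at most 3 parallel edges between any pair of vertices. -/
noncomputable def slice3EC (k t i : ℕ) (Ca : ClosedWalk G) : Multigraph :=
  (G.contractOutside (emb.sliceU k t i Ca)).trim 3

/-- The 3VC slice `H_i^a`: contract every connected component of `G ∖ U` and
delete all parallel edges. -/
noncomputable def slice3VC (k t i : ℕ) (Ca : ClosedWalk G) : Multigraph :=
  (G.contractOutside (emb.sliceU k t i Ca)).trim 1

/-- The edge of `G` underlying an edge of a 3EC slice. -/
noncomputable def sliceEdge3EC (k t i : ℕ) (Ca : ClosedWalk G) :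
    (emb.slice3EC k t i Ca).E → G.E := fun e => e.1.1

/-- The edge of `G` underlying an edge of a 3VC slice. -/
noncomputable def sliceEdge3VC (k t i : ℕ) (Ca : ClosedWalk G) :
    (emb.slice3VC k t i Ca).E → G.E := fun e => e.1.1

end Multigraph.PlanarEmb

/-! ### Branch decompositions and branchwidth -/

inductive BTree (α : Type) : Type
  | leaf : α → BTree α
  | node : BTree α → BTree α → BTree α

namespace BTree

variable {α : Type}

def leaves : BTree α → List α
  | .leaf a => [a]
  | .node l r => l.leaves ++ r.leaves

def subtrees : BTree α → List (BTree α)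
  | .leaf a => [.leaf a]
  | .node l r => .node l r :: (l.subtrees ++ r.subtrees)

end BTree

/-- The size of the separator associated with the edge bipartition
`(E₁, E(G) ∖ E₁)`: the number of vertices incident to edges of both parts. -/
noncomputable def Multigraph.sepSize (G : Multigraph) (E₁ : Set G.E) : ℕ :=
  {v : G.V | (∃ e ∈ E₁, v ∈ G.ends e) ∧ ∃ e ∉ E₁, v ∈ G.ends e}.ncard

/-- `G` has branchwidth at most `w`: some branch decomposition (a binary tree
whose leaves are in bijection with `E(G)`) has all its separators of size at
most `w`. -/
noncomputable def Multigraph.BranchWidthLE (G : Multigraph) (w : ℕ) : Prop :=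
  IsEmpty G.E ∨ ∃ T : BTree G.E, T.leaves.Nodup ∧ (∀ e : G.E, e ∈ T.leaves) ∧
    ∀ S ∈ T.subtrees, G.sepSize {e | e ∈ S.leaves} ≤ w

/-! Let `z` be the merged vertex and delete a set `W` of at most two vertices of the
contracted graph. If `z ∉ W`, the deleted vertices pull back to at most two vertices of `G`.
If `z ∈ W`, let `w` be the preimage of the other deleted vertex, if any. Then `G - {v, w}` is
connected, and a walk in it that passes through `u` can be rerouted around `u`: all neighbours
of `u` lie on `C - w`, which is connected and avoids `u`, `v` and `w`. -/

namespace Multigraph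

variable {G : Multigraph}

lemma Reach.symm {A : Set G.V} {S : Set G.E} {x y : G.V} (h : G.Reach A S x y) :
    G.Reach A S y x := by
  induction h with
  | refl => exact .refl
  | tail _ hab ih =>
    obtain ⟨ha, hb, e, he, hab⟩ := hab
    exact .head ⟨hb, ha, e, he, hab.trans Sym2.eq_swap⟩ ih

lemma Reach.mono {A B : Set G.V} {S : Set G.E} {x y : G.V} (hAB : A ⊆ B)
    (h : G.Reach A S x y) : G.Reach B S x y :=
  Relation.ReflTransGen.mono (fun _ _ ⟨ha, hb, hab⟩ => ⟨hAB ha, hAB hb, hab⟩) _ _ h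

lemma Reach.diff_singleton {A : Set G.V} {u x y : G.V}
    (hN : ∀ a ∈ A \ {u}, ∀ b ∈ A \ {u}, G.AdjV u a → G.AdjV u b →
      G.Reach (A \ {u}) Set.univ a b)
    (h : G.Reach A Set.univ x y) (hx : x ≠ u) (hy : y ≠ u) :
    G.Reach (A \ {u}) Set.univ x y := by
  suffices key : ∀ z, G.Reach A Set.univ x z → (z ≠ u → G.Reach (A \ {u}) Set.univ x z) ∧
      (z = u → ∃ a ∈ A \ {u}, G.AdjV u a ∧ G.Reach (A \ {u}) Set.univ x a) from
    (key y h).1 hy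
  intro z hz
  induction hz with
  | refl => exact ⟨fun _ => .refl, fun h => absurd h hx⟩
  | @tail b c _ hbc ih =>
    obtain ⟨hbA, hcA, e, -, he⟩ := hbc
    by_cases hb : b = u
    · obtain ⟨a, ha, hua, hxa⟩ := ih.2 hb
      exact ⟨fun hc => hxa.trans (hN a ha c ⟨hcA, hc⟩ hua ⟨e, hb ▸ he⟩),
        fun _ => ⟨a, ha, hua, hxa⟩⟩
    · have hb' : b ∈ A \ {u} := ⟨hbA, hb⟩
      exact ⟨fun hc => (ih.1 hb).tail ⟨hb', ⟨hcA, hc⟩, e, trivial, he⟩,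
        fun hc => ⟨b, hb', ⟨e, by rw [he, hc, Sym2.eq_swap]⟩, ih.1 hb⟩⟩

end Multigraph

namespace ClosedWalk

variable {G : Multigraph} (C : ClosedWalk G) {A : Set G.V} {S : Set G.E}

lemma reach_vert_of_le (hS : C.edgeSet ⊆ S) {i j : ℕ} (hij : i ≤ j) (hj : j ≤ C.n)
    (hA : ∀ k, i ≤ k → k ≤ j → C.vert k ∈ A) : G.Reach A S (C.vert i) (C.vert j) := by
  induction j, hij using Nat.le_induction with
  | base => exact .refl
  | succ j hij ih =>
    exact (ih (by omega) fun k hik hkj => hA k hik (by omega)).tail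
      ⟨hA j hij (by omega), hA (j + 1) (by omega) le_rfl, C.edge j, hS ⟨j, by omega, rfl⟩,
        C.ends_eq j (by omega)⟩

variable {C}

lemma IsSimpleCycle.reach (hC : C.IsSimpleCycle) (hS : C.edgeSet ⊆ S)
    (hA : (C.vertexSet \ A).Subsingleton) {a b : G.V} (ha : a ∈ C.vertexSet)
    (hb : b ∈ C.vertexSet) (haA : a ∈ A) (hbA : b ∈ A) : G.Reach A S a b := by
  obtain ⟨i, hi, rfl⟩ := ha
  obtain ⟨j, hj, rfl⟩ := hb
  wlog hij : i ≤ j generalizing i j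
  · exact (this j hj hbA i hi haA (by omega)).symm
  by_cases hseg : ∀ k, i ≤ k → k ≤ j → C.vert k ∈ A
  · exact C.reach_vert_of_le hS hij hj.le hseg
  push Not at hseg
  obtain ⟨m, him, hmj, hmA⟩ := hseg
  have him' : i < m := lt_of_le_of_ne him fun h => hmA (h ▸ haA)
  have hmj' : m < j := lt_of_le_of_ne hmj fun h => hmA (h ▸ hbA)
  -- the deleted vertex lies strictly between `i` and `j`, so go the other way round
  have hmem : ∀ k < C.n, k ≠ m → C.vert k ∈ A := fun k hk hkm => by
    by_contra hkA
    exact hkm <| hC.2 k hk m (by omega) <|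
      hA ⟨⟨k, hk, rfl⟩, hkA⟩ ⟨⟨m, by omega, rfl⟩, hmA⟩
  have hjn : G.Reach A S (C.vert j) (C.vert C.n) := by
    refine C.reach_vert_of_le hS hj.le le_rfl fun k hjk hkn => ?_
    rcases hkn.lt_or_eq with hkn | rfl
    · exact hmem k hkn (by omega)
    · exact C.closed ▸ hmem 0 C.npos (by omega)
  have h0i : G.Reach A S (C.vert 0) (C.vert i) :=
    C.reach_vert_of_le hS (Nat.zero_le i) hi.le fun k _ hki => hmem k (by omega) (by omega)
  exact Multigraph.Reach.symm (hjn.trans (C.closed ▸ h0i))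

end ClosedWalk

namespace Multigraph

variable {G : Multigraph} {S : Set G.V}

variable (G S) in
def contractMk (a : G.V) : (G.contractSet S).V := Quotient.mk (G.contractSetoid S) a

lemma contractMk_surjective : Function.Surjective (G.contractMk S) :=
  Quotient.mk_surjective

lemma contractMk_eq_contractMk_iff {a b : G.V} :
    G.contractMk S a = G.contractMk S b ↔ a = b ∨ a ∈ S ∧ b ∈ S :=
  Quotient.eq

lemma contractMk_eq_of_mem {a b : G.V} (ha : a ∈ S) (hb : b ∈ S) :
    G.contractMk S a = G.contractMk S b :=
  contractMk_eq_contractMk_iff.2 (Or.inr ⟨ha, hb⟩)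

lemma contractMk_injOn : Set.InjOn (G.contractMk S) Sᶜ := fun _ ha _ _ hab =>
  (contractMk_eq_contractMk_iff.1 hab).resolve_right fun h => ha h.1

lemma Reach.map_contractMk {A : Set G.V} {T : Set G.E} {B : Set (G.contractSet S).V}
    {x y : G.V} (hAB : Set.MapsTo (G.contractMk S) A B) (h : G.Reach A T x y) :
    (G.contractSet S).Reach B Set.univ (G.contractMk S x) (G.contractMk S y) := by
  induction h with
  | refl => exact .refl
  | @tail b c _ hbc ih =>
    obtain ⟨hb, hc, e, -, he⟩ := hbc
    by_cases hq : G.contractMk S b = G.contractMk S c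
    · exact hq ▸ ih
    · have hnd : ¬ (Sym2.map (Quotient.mk (G.contractSetoid S)) (G.ends e)).IsDiag := by
        rw [he]
        exact hq
      exact ih.tail ⟨hAB hb, hAB hc, ⟨e, hnd⟩, trivial, by
        show Sym2.map _ (G.ends e) = _
        rw [he]
        rfl⟩

lemma vertexConn_contractSet {k : ℕ}
    (h : ∀ W : Finset (G.contractSet S).V, W.card < k →
      G.ConnectedOn (G.contractMk S ⁻¹' (↑W)ᶜ) Set.univ) :
    (G.contractSet S).VertexConn k := by
  intro W hW p hp q hq
  obtain ⟨x, rfl⟩ := contractMk_surjective p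
  obtain ⟨y, rfl⟩ := contractMk_surjective q
  exact (h W hW x hp y hq).map_contractMk (Set.mapsTo_preimage _ _)

variable (S) in
noncomputable def contractPreimage (W : Finset (G.contractSet S).V) : Finset G.V :=
  Finset.univ.filter fun a => G.contractMk S a ∈ W

@[simp]
lemma mem_contractPreimage {W : Finset (G.contractSet S).V} {a : G.V} :
    a ∈ G.contractPreimage S W ↔ G.contractMk S a ∈ W := by
  simp [contractPreimage]

lemma coe_contractPreimage (W : Finset (G.contractSet S).V) :
    (↑(G.contractPreimage S W) : Set G.V) = G.contractMk S ⁻¹' ↑W := by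
  ext; simp

lemma card_contractPreimage_le {W : Finset (G.contractSet S).V}
    (hS : ∀ a ∈ S, G.contractMk S a ∉ W) : (G.contractPreimage S W).card ≤ W.card :=
  Finset.card_le_card_of_injOn _ (fun _ ha => mem_contractPreimage.1 ha)
    (contractMk_injOn.mono fun a ha haS => hS a haS (mem_contractPreimage.1 ha))

lemma card_lt_of_forall_contractMk_mem {W : Finset (G.contractSet S).V} {a₀ : G.V}
    (ha₀ : a₀ ∈ S) (hz : G.contractMk S a₀ ∈ W) {R : Finset G.V}
    (hR : ∀ a ∈ R, G.contractMk S a ∈ W ∧ a ∉ S) : R.card < W.card := by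
  have hmaps : ∀ a ∈ R, G.contractMk S a ∈ W.erase (G.contractMk S a₀) := fun a ha =>
    Finset.mem_erase.2 ⟨fun h => (hR a ha).2
      ((contractMk_eq_contractMk_iff.1 h).elim (· ▸ ha₀) And.left), (hR a ha).1⟩
  have := Finset.card_le_card_of_injOn _ hmaps (contractMk_injOn.mono fun a ha => (hR a ha).2)
  rw [Finset.card_erase_of_mem hz] at this
  have := Finset.card_pos.2 ⟨_, hz⟩
  omega

lemma connectedOn_contractMk_preimage_of_forall_not_mem {k : ℕ} (hG : G.VertexConn k)
    {W : Finset (G.contractSet S).V} (hW : W.card < k) (hS : ∀ a ∈ S, G.contractMk S a ∉ W) :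
    G.ConnectedOn (G.contractMk S ⁻¹' (↑W)ᶜ) Set.univ := by
  have := hG _ ((card_contractPreimage_le hS).trans_lt hW)
  rwa [coe_contractPreimage] at this

lemma connectedOn_contractMk_preimage_of_mem {C : ClosedWalk G} (hC : C.IsSimpleCycle) {u v : G.V}
    (hG : G.VertexConn 3) (hu : u ∉ C.vertexSet) (hv : v ∉ C.vertexSet)
    (hNu : ∀ w, G.AdjV u w → w ∈ C.vertexSet) {W : Finset (G.contractSet {u, v}).V}
    (hW : W.card < 3) (hz : G.contractMk {u, v} u ∈ W) :
    G.ConnectedOn (G.contractMk {u, v} ⁻¹' (↑W)ᶜ) Set.univ := by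
  set R := (G.contractPreimage {u, v} W).filter (· ∉ ({u, v} : Set G.V))
  have hR : R.card ≤ 1 := by
    have := card_lt_of_forall_contractMk_mem (by simp) hz (R := R) fun a ha => by simpa [R] using ha
    omega
  set F := insert v R
  have hF : F.card < 3 := by
    have : F.card ≤ R.card + 1 := Finset.card_insert_le v R
    omega
  have hvW : G.contractMk {u, v} v ∈ W := by
    rwa [contractMk_eq_of_mem (b := u) (Set.mem_insert_of_mem u (Set.mem_singleton v))
      (Set.mem_insert u {v})]
  have hcompl : ∀ a, G.contractMk {u, v} a ∉ W → a ∈ (↑F : Set G.V)ᶜ \ {u} := by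
    intro a ha
    have hav : a ≠ v := fun h => ha (h ▸ hvW)
    exact ⟨by simp [F, R, ha, hav], fun h : a = u => ha (h ▸ hz)⟩
  intro x hx y hy
  have hreach := hG F hF x (hcompl x hx).1 y (hcompl y hy).1
  refine (Reach.diff_singleton (fun a ha b hb hua hub => hC.reach (Set.subset_univ _) ?_
    (hNu a hua) (hNu b hub) ha hb) hreach (hcompl x hx).2 (hcompl y hy).2).mono ?_
  · refine Set.Subsingleton.anti (t := ↑R) (fun a ha b hb => Finset.card_le_one.1 hR a ha b hb)
      fun c ⟨hcC, hcA⟩ => ?_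
    have hcu : c ≠ u := fun h => hu (h ▸ hcC)
    have hcv : c ≠ v := fun h => hv (h ▸ hcC)
    have hcF : c ∈ F := by
      by_contra hcF
      exact hcA ⟨hcF, hcu⟩
    simpa [F, hcv] using hcF
  · rintro a ⟨haF, hau⟩ haW
    simp_all [F, R]

end Multigraph

theorem identify_vertices_triconnected_general (G : Multigraph) (hG : G.VertexConn 3)
    (C : ClosedWalk G) (hC : C.IsSimpleCycle) (u v : G.V)
    (hu : u ∉ C.vertexSet) (hv : v ∉ C.vertexSet)
    (hNu : ∀ w, G.AdjV u w → w ∈ C.vertexSet) :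
    (G.contractSet {u, v}).VertexConn 3 := by
  refine Multigraph.vertexConn_contractSet fun W hW => ?_
  by_cases hz : G.contractMk {u, v} u ∈ W
  · exact Multigraph.connectedOn_contractMk_preimage_of_mem hC hG hu hv hNu hW hz
  · exact Multigraph.connectedOn_contractMk_preimage_of_forall_not_mem hG hW fun a ha =>
      Multigraph.contractMk_eq_of_mem (b := u) ha (by simp) ▸ hz

/-- If `G` is triconnected, `C` is a simple cycle of `G`,
and `u`, `v` are two vertices of `G ∖ C` all of whose neighbors lie on `C`,
then identifying `u` and `v` yields a triconnected graph. -/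
theorem identify_vertices_triconnected (G : Multigraph) (hG : G.VertexConn 3)
    (C : ClosedWalk G) (hC : C.IsSimpleCycle) (u v : G.V) (huv : u ≠ v)
    (hu : u ∉ C.vertexSet) (hv : v ∉ C.vertexSet)
    (hNu : ∀ w, G.AdjV u w → w ∈ C.vertexSet)
    (hNv : ∀ w, G.AdjV v w → w ∈ C.vertexSet) :
    (G.contractSet {u, v}).VertexConn 3 :=
  identify_vertices_triconnected_general G hG C hC u v hu hv hNu
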